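/- Let ((V_{ij}), x) be such that x preserves the kernel flag (V_{ij}) of type Y, and for every j > 1 the induced map V_{ij}/V_{i,j-1} → V_{i+1,j-1}/V_{i+1,j-2} is injective. Then x admits a Jordan basis of type Y, i.e., x ∈ O_Y. -/

import Mathlib

open scoped BigOperators Classical

noncomputable section

/-- A triangular array of size `n`: entries `y i j` for `1 ≤ i ≤ n`, `1 ≤ j ≤ n - i + 1`
(zero outside this range), weakly decreasing along ladders: `y (i-1) (j+1) ≤ y i j`. -/
def IsTri (n : ℕ) (y : ℕ → ℕ → ℕ) : Prop :=
  (∀ i j, ¬(1 ≤ i ∧ i ≤ n ∧ 1 ≤ j ∧ j ≤ n - i + 1) → y i j = 0) ∧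
  (∀ i j, 2 ≤ i → i ≤ n → 1 ≤ j → j ≤ n - i + 1 → y (i - 1) (j + 1) ≤ y i j)

/-- The dimension vector of a triangular array: the `i`-th chute sum. -/
def udim (n : ℕ) (y : ℕ → ℕ → ℕ) (i : ℕ) : ℕ := ∑ j ∈ Finset.Icc 1 (n - i + 1), y i j

/-- The set `P(w)` of triangular arrays of size `n` with dimension vector `w`. -/
def InP (n : ℕ) (w : ℕ → ℕ) (y : ℕ → ℕ → ℕ) : Prop :=
  IsTri n y ∧ ∀ i, 1 ≤ i → i ≤ n → udim n y i = w i

/-- The set `B(w)`: families `(b i j)` for `1 ≤ i ≤ j ≤ n` (zero outside) with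
`∑ b i j • γ_{ij} = w`, i.e. for each `1 ≤ k ≤ n`, `∑_{i ≤ k ≤ j} b i j = w k`. -/
def InB (n : ℕ) (w : ℕ → ℕ) (b : ℕ → ℕ → ℕ) : Prop :=
  (∀ i j, ¬(1 ≤ i ∧ i ≤ j ∧ j ≤ n) → b i j = 0) ∧
  ∀ k, 1 ≤ k → k ≤ n → (∑ i ∈ Finset.Icc 1 k, ∑ j ∈ Finset.Icc k n, b i j) = w k

/-- The map `ν : P(w) → B(w)`. -/
def nuMap (n : ℕ) (y : ℕ → ℕ → ℕ) : ℕ → ℕ → ℕ := fun i j =>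
  if 1 ≤ i ∧ i ≤ j ∧ j ≤ n then y i (j - i + 1) - y (i - 1) (j - i + 2) else 0

/-- The map `ν̄ : B(w) → P(w)`. -/
def nubarMap (n : ℕ) (b : ℕ → ℕ → ℕ) : ℕ → ℕ → ℕ := fun i j =>
  if 1 ≤ i ∧ i ≤ n ∧ 1 ≤ j ∧ j ≤ n - i + 1 then ∑ h ∈ Finset.Icc 1 i, b h (i + j - 1) else 0

/-- `Raise Y i j` increments the entry in chute `i`, column `j`. -/
def Raise (y : ℕ → ℕ → ℕ) (i j : ℕ) : ℕ → ℕ → ℕ := fun p q =>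
  if p = i ∧ q = j then y p q + 1 else y p q

/-- `Lower Y i j` decrements the entry in chute `i`, column `j`. -/
def Lower (y : ℕ → ℕ → ℕ) (i j : ℕ) : ℕ → ℕ → ℕ := fun p q =>
  if p = i ∧ q = j then y p q - 1 else y p q

/-- `K_i(Y,k) = max({1} ∪ {j : 2 ≤ j ≤ k, y i j < y (i+1) (j-1)})`. -/
def Kval (y : ℕ → ℕ → ℕ) (i k : ℕ) : ℕ :=
  ((Finset.Icc 2 k).filter (fun j => y i j < y (i + 1) (j - 1))).sup id ⊔ 1

/-- Procedure `a`: `a(Y,i,k) = (Raise(Y,i,K_i(Y,k)), i-1, K_i(Y,k))`. -/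
def aStep (t : (ℕ → ℕ → ℕ) × ℕ × ℕ) : (ℕ → ℕ → ℕ) × ℕ × ℕ :=
  (Raise t.1 t.2.1 (Kval t.1 t.2.1 t.2.2), t.2.1 - 1, Kval t.1 t.2.1 t.2.2)

/-- Procedure `A_i`: apply `a` exactly `i` times starting from `(Y, i, n - i + 1)`. -/
def Aproc (n i : ℕ) (y : ℕ → ℕ → ℕ) : ℕ → ℕ → ℕ := (aStep^[i] (y, i, n - i + 1)).1

/-- `Del↘(Y)` : delete the first chute. -/
def delChute (y : ℕ → ℕ → ℕ) : ℕ → ℕ → ℕ := fun i j =>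
  if 1 ≤ i ∧ 1 ≤ j then y (i + 1) j else 0

/-- `Y ∪↘ Q` : adjoin `Q` as the new topmost chute. -/
def adjChute (y : ℕ → ℕ → ℕ) (q : ℕ → ℕ) : ℕ → ℕ → ℕ := fun i j =>
  if i = 0 then 0 else if i = 1 then q j else y (i - 1) j

/-- The set whose infimum is `I(Y,k)`; `I(Y,k) < ∞` iff this set is nonempty. -/
def Iset (n : ℕ) (y : ℕ → ℕ → ℕ) (k : ℕ) : Set ℕ := {j | k ≤ j ∧ j ≤ n ∧ 0 < y 1 j}

/-- `I(Y,k)`: the smallest `j ≥ k` with `y 1 j > 0`. -/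
def Idef (n : ℕ) (y : ℕ → ℕ → ℕ) (k : ℕ) : ℕ := sInf (Iset n y k)

/-- The set whose infimum is `J(Y,k)`; `J(Y,k) < ∞` iff this set is nonempty. -/
def Jset (n : ℕ) (y : ℕ → ℕ → ℕ) (k : ℕ) : Set ℕ :=
  {j | Idef n y k < j ∧ j ≤ n ∧ y 1 j < y 2 (j - 1)}

/-- `J(Y,k)`: the smallest `j > I(Y,k)` with `y 1 j < y 2 (j-1)`. -/
def Jdef (n : ℕ) (y : ℕ → ℕ → ℕ) (k : ℕ) : ℕ := sInf (Jset n y k)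

/-- Procedure `B`, by induction on the size `n`. -/
def Bproc : ℕ → (ℕ → ℕ → ℕ) → ℕ → ((ℕ → ℕ → ℕ) × ℕ)
  | 0, y, _ => (y, 1)
  | n + 1, y, k =>
    if (Jset (n + 1) y k).Nonempty then
      let zr := Bproc n (delChute y) (Jdef (n + 1) y k - 1)
      (Lower (adjChute zr.1 (y 1)) 1 (Idef (n + 1) y k), zr.2 + 1)
    else (Lower y 1 (Idef (n + 1) y k), 1)

/-- Apply `A_m^{y_{N+1-m,m} - y_{N-m,m+1}}` for `m = 1, …, M` (innermost `A_1`). -/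
def applyAs (N : ℕ) (y : ℕ → ℕ → ℕ) : ℕ → (ℕ → ℕ → ℕ) → (ℕ → ℕ → ℕ)
  | 0, z => z
  | m + 1, z => (Aproc N (m + 1))^[y (N - m) (m + 1) - y (N - m - 1) (m + 2)] (applyAs N y m z)

/-- `Del↗(Y)` : delete the last ladder (of an array of size `n`). -/
def delLadder (n : ℕ) (y : ℕ → ℕ → ℕ) : ℕ → ℕ → ℕ := fun i j =>
  if 1 ≤ i ∧ 1 ≤ j ∧ i + j ≤ n then y i j else 0

/-- The combinatorial Fourier transform `T`. -/
def Tmap : ℕ → (ℕ → ℕ → ℕ) → (ℕ → ℕ → ℕ)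
  | 0, y => y
  | 1, y => y
  | n + 2, y =>
      applyAs (n + 2) y (n + 2) (adjChute (Tmap (n + 1) (delLadder (n + 2) y)) (fun _ => 0))

/-- Iterate procedure `B` (with `k = 1`), recording the list of produced integers `q`. -/
def Biter (n : ℕ) (y : ℕ → ℕ → ℕ) : ℕ → ((ℕ → ℕ → ℕ) × List ℕ)
  | 0 => (y, [])
  | m + 1 =>
    let p := Biter n y m
    let b := Bproc n p.1 1
    (b.1, p.2 ++ [b.2])

/-- `Y ∪↗ P` : adjoin `P` as the new bottommost ladder (result of size `N`). -/
def adjLadder (N : ℕ) (z : ℕ → ℕ → ℕ) (p : ℕ → ℕ) : ℕ → ℕ → ℕ := fun i j =>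
  if 1 ≤ i ∧ 1 ≤ j ∧ i + j = N + 1 then p j else z i j

/-- The inverse combinatorial Fourier transform `T'`. -/
def Tinv : ℕ → (ℕ → ℕ → ℕ) → (ℕ → ℕ → ℕ)
  | 0, y => y
  | 1, y => y
  | n + 2, y =>
    let r := Biter (n + 2) y (udim (n + 2) y 1)
    adjLadder (n + 2) (Tinv (n + 1) (delChute r.1)) (fun j => r.2.countP (fun q => decide (j ≤ q)))

/-- The composition `x_{i+j-1} ∘ ⋯ ∘ x_{i+1} ∘ x_i` (`j` maps, starting at vertex `i`). -/
def chainMap (w : ℕ → ℕ) (x : ∀ m : ℕ, (Fin (w m) → ℂ) →ₗ[ℂ] (Fin (w (m + 1)) → ℂ)) (i : ℕ) :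
    ∀ j : ℕ, (Fin (w i) → ℂ) →ₗ[ℂ] (Fin (w (i + j)) → ℂ)
  | 0 => LinearMap.id
  | j + 1 => (x (i + j)).comp (chainMap w x i j)

/-- `u` is a Jordan basis of type `Y` for the representation `x`. -/
def IsJordanBasis (n : ℕ) (w : ℕ → ℕ) (y : ℕ → ℕ → ℕ)
    (x : ∀ m : ℕ, (Fin (w m) → ℂ) →ₗ[ℂ] (Fin (w (m + 1)) → ℂ))
    (u : ∀ m : ℕ, ℕ → ℕ → (Fin (w m) → ℂ)) : Prop :=
  (∀ i, 1 ≤ i → i ≤ n →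
    (LinearIndependent ℂ
      (fun p : {p : ℕ × ℕ // 1 ≤ p.1 ∧ p.1 ≤ n - i + 1 ∧ 1 ≤ p.2 ∧ p.2 ≤ y i p.1} =>
        u i p.1.1 p.1.2) ∧
    Submodule.span ℂ
      (Set.range (fun p : {p : ℕ × ℕ // 1 ≤ p.1 ∧ p.1 ≤ n - i + 1 ∧ 1 ≤ p.2 ∧ p.2 ≤ y i p.1} =>
        u i p.1.1 p.1.2)) = ⊤)) ∧
  (∀ i j k, 1 ≤ i → i + 1 ≤ n → 1 ≤ j → j ≤ n - i + 1 → 1 ≤ k → k ≤ y i j →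
    x i (u i j k) = if 2 ≤ j then u (i + 1) (j - 1) k else 0)

/-- `V` is a kernel flag of type `Y` (with the convention `V i 0 = ⊥`). -/
def IsKerFlag (n : ℕ) (w : ℕ → ℕ) (y : ℕ → ℕ → ℕ)
    (V : ∀ i : ℕ, ℕ → Submodule ℂ (Fin (w i) → ℂ)) : Prop :=
  ∀ i, 1 ≤ i → i ≤ n →
    V i 0 = ⊥ ∧
    (∀ j, j ≤ n - i → V i j ≤ V i (j + 1)) ∧
    V i (n - i + 1) = ⊤ ∧
    (∀ j, 1 ≤ j → j ≤ n - i + 1 → Module.finrank ℂ (V i j) = ∑ h ∈ Finset.Icc 1 j, y i h)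

/-- The representation `x` preserves the kernel flag `V`. -/
def PreservesFlag (n : ℕ) (w : ℕ → ℕ)
    (x : ∀ m : ℕ, (Fin (w m) → ℂ) →ₗ[ℂ] (Fin (w (m + 1)) → ℂ))
    (V : ∀ i : ℕ, ℕ → Submodule ℂ (Fin (w i) → ℂ)) : Prop :=
  ∀ i, 1 ≤ i → i + 1 ≤ n → ∀ j, 1 ≤ j → j ≤ n - i + 1 → ∀ v ∈ V i j,
    (j = 1 → x i v = 0) ∧ (2 ≤ j → x i v ∈ V (i + 1) (j - 1))

/-- The flag of kernels `V i j = ker (x_{i+j-1} ∘ ⋯ ∘ x_i)`. -/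
def kerFlag (w : ℕ → ℕ) (x : ∀ m : ℕ, (Fin (w m) → ℂ) →ₗ[ℂ] (Fin (w (m + 1)) → ℂ)) :
    ∀ i : ℕ, ℕ → Submodule ℂ (Fin (w i) → ℂ) := fun i j => LinearMap.ker (chainMap w x i j)

/-- The Lie-algebra stabilizer of the flag `V` inside `𝔤(w) = ∏ End(ℂ^{w_i})`. -/
def stabFlagSub (n : ℕ) (w : ℕ → ℕ) (V : ∀ i : ℕ, ℕ → Submodule ℂ (Fin (w i) → ℂ)) :
    Submodule ℂ (∀ i : Fin n, (Fin (w (i.val + 1)) → ℂ) →ₗ[ℂ] (Fin (w (i.val + 1)) → ℂ)) where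
  carrier := {g | ∀ (i : Fin n) (j : ℕ), 1 ≤ j → j ≤ n - (i.val + 1) + 1 →
    ∀ v ∈ V (i.val + 1) j, g i v ∈ V (i.val + 1) j}
  add_mem' := by
    intro a b ha hb i j h1 h2 v hv
    simpa using (V (i.val + 1) j).add_mem (ha i j h1 h2 v hv) (hb i j h1 h2 v hv)
  zero_mem' := by
    intro i j h1 h2 v hv
    simpa using (V (i.val + 1) j).zero_mem
  smul_mem' := by
    intro c a ha i j h1 h2 v hv
    simpa using (V (i.val + 1) j).smul_mem c (ha i j h1 h2 v hv)

/-- The linear space `E(w)^V` of representations preserving the kernel flag `V`. -/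
def presFlagSub (n : ℕ) (w : ℕ → ℕ) (V : ∀ i : ℕ, ℕ → Submodule ℂ (Fin (w i) → ℂ)) :
    Submodule ℂ (∀ i : Fin (n - 1), (Fin (w (i.val + 1)) → ℂ) →ₗ[ℂ] (Fin (w (i.val + 2)) → ℂ)) where
  carrier := {x | ∀ (i : Fin (n - 1)) (j : ℕ), 1 ≤ j → j ≤ n - (i.val + 1) + 1 →
    ∀ v ∈ V (i.val + 1) j,
      (j = 1 → x i v = 0) ∧ (2 ≤ j → x i v ∈ V (i.val + 2) (j - 1))}
  add_mem' := by
    intro a b ha hb i j h1 h2 v hv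
    obtain ⟨ha1, ha2⟩ := ha i j h1 h2 v hv
    obtain ⟨hb1, hb2⟩ := hb i j h1 h2 v hv
    constructor
    · intro hj
      simp [ha1 hj, hb1 hj]
    · intro hj
      simpa using (V (i.val + 2) (j - 1)).add_mem (ha2 hj) (hb2 hj)
  zero_mem' := by
    intro i j h1 h2 v hv
    constructor
    · intro _; simp
    · intro _
      simpa using (V (i.val + 2) (j - 1)).zero_mem
  smul_mem' := by
    intro c a ha i j h1 h2 v hv
    obtain ⟨ha1, ha2⟩ := ha i j h1 h2 v hv
    constructor
    · intro hj
      simp [ha1 hj]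
    · intro hj
      simpa using (V (i.val + 2) (j - 1)).smul_mem c (ha2 hj)

end


/-! Build the Jordan basis vertex by vertex. At vertex `i` and column `j`, the images
`x_{i-1} (u_{i-1,j+1}^{(k)})` lie in `V_{ij}` and, because the induced map
`V_{i-1,j+1}/V_{i-1,j} → V_{ij}/V_{i,j-1}` is injective, they stay linearly independent modulo
`V_{i,j-1}`; extend them to a basis of `V_{ij}` modulo `V_{i,j-1}`, which has
`dim V_{ij} - dim V_{i,j-1} = y_{ij}` elements. Going up the flag, the columns together span
`ℂ^{w_i}`, and there are `∑_j y_{ij} = w_i` of them, so they form a basis. -/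

open Module Submodule

section BasisModulo

variable {K M : Type*} [Field K] [AddCommGroup M] [Module K M]

def IsBasisModulo (W' W : Submodule K M) (d : ℕ) (t : ℕ → M) : Prop :=
  (∀ k : Fin d, t (k + 1) ∈ W) ∧
    LinearIndependent K (fun k : Fin d => W'.mkQ (t (k + 1))) ∧
    W ≤ W' ⊔ span K (Set.range fun k : Fin d => t (k + 1))

variable {W' W : Submodule K M}

theorem span_mkQ_le_map_mkQ {e : ℕ} {s : ℕ → M} (hs : ∀ k : Fin e, s (k + 1) ∈ W) :
    span K (Set.range fun k : Fin e => W'.mkQ (s (k + 1))) ≤ W.map W'.mkQ := by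
  rw [span_le]
  rintro _ ⟨k, rfl⟩
  exact mem_map_of_mem (hs k)

variable [Module.Finite K M]

theorem finrank_map_mkQ_add_finrank (hle : W' ≤ W) :
    finrank K (W.map W'.mkQ) + finrank K W' = finrank K W := by
  have := LinearMap.finrank_range_add_finrank_ker (W'.mkQ.domRestrict W)
  rwa [LinearMap.range_domRestrict, LinearMap.ker_domRestrict, ker_mkQ,
    (comapSubtypeEquivOfLe hle).finrank_eq] at this

theorem isBasisModulo_of_linearIndependent (hle : W' ≤ W) {d : ℕ}
    (hd : finrank K W = finrank K W' + d) {t : ℕ → M} (ht : ∀ k : Fin d, t (k + 1) ∈ W)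
    (hli : LinearIndependent K (fun k : Fin d => W'.mkQ (t (k + 1)))) :
    IsBasisModulo W' W d t := by
  refine ⟨ht, hli, ?_⟩
  have hspan : span K (Set.range fun k : Fin d => W'.mkQ (t (k + 1))) = W.map W'.mkQ := by
    refine eq_of_le_of_finrank_eq (span_mkQ_le_map_mkQ ht) ?_
    rw [finrank_span_eq_card hli, Fintype.card_fin]
    have := finrank_map_mkQ_add_finrank hle
    omega
  calc W ≤ (W.map W'.mkQ).comap W'.mkQ := le_comap_map _ _
    _ = ((span K (Set.range fun k : Fin d => t (k + 1))).map W'.mkQ).comap W'.mkQ := by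
      rw [map_span, ← Set.range_comp, ← hspan]
      rfl
    _ = W' ⊔ span K (Set.range fun k : Fin d => t (k + 1)) := comap_map_mkQ _ _

theorem exists_linearIndependent_mkQ_update (hle : W' ≤ W) {d : ℕ}
    (hd : finrank K W = finrank K W' + d) {e : ℕ} (he : e < d) (s : ℕ → M)
    (hli : LinearIndependent K (fun k : Fin e => W'.mkQ (s (k + 1)))) :
    ∃ v ∈ W, LinearIndependent K
      (fun k : Fin (e + 1) => W'.mkQ (Function.update s (e + 1) v (k + 1))) := by
  have hnle : ¬ W.map W'.mkQ ≤ span K (Set.range fun k : Fin e => W'.mkQ (s (k + 1))) := by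
    intro h
    have hspan : finrank K (span K (Set.range fun k : Fin e => W'.mkQ (s (k + 1)))) ≤ e := by
      simpa [Set.finrank] using finrank_range_le_card (R := K) fun k : Fin e => W'.mkQ (s (k + 1))
    have := finrank_mono h
    have := finrank_map_mkQ_add_finrank hle
    omega
  obtain ⟨_, ⟨v, hv, rfl⟩, hvs⟩ := Set.not_subset.mp hnle
  refine ⟨v, hv, ?_⟩
  have hsnoc : (fun k : Fin (e + 1) => W'.mkQ (Function.update s (e + 1) v (k + 1))) =
      Fin.snoc (fun k : Fin e => W'.mkQ (s (k + 1))) (W'.mkQ v) := by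
    funext k
    refine Fin.lastCases ?_ (fun k => ?_) k
    · simp
    · simp [Function.update_of_ne (show (k : ℕ) + 1 ≠ e + 1 by omega)]
  rw [hsnoc, linearIndependent_finSnoc]
  exact ⟨hli, hvs⟩

theorem exists_isBasisModulo_extending (hle : W' ≤ W) {d : ℕ}
    (hd : finrank K W = finrank K W' + d) {e : ℕ} {s : ℕ → M} (hs : ∀ k : Fin e, s (k + 1) ∈ W)
    (hli : LinearIndependent K (fun k : Fin e => W'.mkQ (s (k + 1)))) :
    ∃ t, IsBasisModulo W' W d t ∧ ∀ k : Fin e, t (k + 1) = s (k + 1) := by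
  have hed : e ≤ d := by
    have hspan := finrank_mono (span_mkQ_le_map_mkQ (W' := W') hs)
    rw [finrank_span_eq_card hli, Fintype.card_fin] at hspan
    have := finrank_map_mkQ_add_finrank hle
    omega
  suffices h : ∀ r e (s : ℕ → M), e + r = d → (∀ k : Fin e, s (k + 1) ∈ W) →
      LinearIndependent K (fun k : Fin e => W'.mkQ (s (k + 1))) →
      ∃ t, IsBasisModulo W' W d t ∧ ∀ k : Fin e, t (k + 1) = s (k + 1) from
    h (d - e) e s (by omega) hs hli
  intro r
  induction r with
  | zero =>
    rintro e s rfl hs hli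
    exact ⟨s, isBasisModulo_of_linearIndependent hle hd hs hli, fun _ => rfl⟩
  | succ r ih =>
    intro e s hr hs hli
    obtain ⟨v, hv, hli'⟩ := exists_linearIndependent_mkQ_update hle hd (by omega) s hli
    have hs' : ∀ k : Fin (e + 1), Function.update s (e + 1) v (k + 1) ∈ W := by
      refine Fin.lastCases ?_ (fun k => ?_)
      · simpa using hv
      · simpa [Function.update_of_ne (show (k : ℕ) + 1 ≠ e + 1 by omega)] using hs k
    obtain ⟨t, ht, hts⟩ := ih (e + 1) _ (by omega) hs' hli'
    refine ⟨t, ht, fun k => ?_⟩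
    simpa [Function.update_of_ne (show (k : ℕ) + 1 ≠ e + 1 by omega)] using hts k.castSucc

end BasisModulo

section Flag

variable {K M : Type*} [Field K] [AddCommGroup M] [Module K M]

def IsFlagOfType (F : ℕ → Submodule K M) (N : ℕ) (y : ℕ → ℕ) : Prop :=
  F 0 = ⊥ ∧ (∀ j < N, F j ≤ F (j + 1)) ∧ F N = ⊤ ∧
    ∀ j, 1 ≤ j → j ≤ N → finrank K (F j) = ∑ h ∈ Finset.Icc 1 j, y h

def IsAdaptedBasis (F : ℕ → Submodule K M) (N : ℕ) (y : ℕ → ℕ) (u : ℕ → ℕ → M) : Prop :=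
  ∀ j, 1 ≤ j → j ≤ N → IsBasisModulo (F (j - 1)) (F j) (y j) (u j)

abbrev Cells (N : ℕ) (y : ℕ → ℕ) : Type :=
  {p : ℕ × ℕ // 1 ≤ p.1 ∧ p.1 ≤ N ∧ 1 ≤ p.2 ∧ p.2 ≤ y p.1}

def cellsEquiv (N : ℕ) (y : ℕ → ℕ) :
    Cells N y ≃ (Finset.Icc 1 N).sigma fun j => Finset.Icc 1 (y j) :=
  Equiv.subtypeEquiv (Equiv.sigmaEquivProd ℕ ℕ).symm fun p => by
    simp only [Finset.mem_sigma, Finset.mem_Icc, Equiv.sigmaEquivProd_symm_apply]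
    tauto

instance (N : ℕ) (y : ℕ → ℕ) : Finite (Cells N y) := Finite.of_equiv _ (cellsEquiv N y).symm

theorem nat_card_cells (N : ℕ) (y : ℕ → ℕ) : Nat.card (Cells N y) = ∑ j ∈ Finset.Icc 1 N, y j := by
  rw [Nat.card_congr (cellsEquiv N y), Nat.card_eq_finsetCard, Finset.card_sigma]
  simp

variable {F : ℕ → Submodule K M} {N : ℕ} {y : ℕ → ℕ}

theorem IsFlagOfType.pred_le (hF : IsFlagOfType F N y) {j : ℕ} (hj1 : 1 ≤ j) (hj2 : j ≤ N) :
    F (j - 1) ≤ F j := by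
  simpa [Nat.sub_add_cancel hj1] using hF.2.1 (j - 1) (by omega)

theorem IsFlagOfType.finrank_eq_add (hF : IsFlagOfType F N y) {j : ℕ} (hj1 : 1 ≤ j)
    (hj2 : j ≤ N) : finrank K (F j) = finrank K (F (j - 1)) + y j := by
  obtain ⟨j, rfl⟩ : ∃ i, j = i + 1 := ⟨j - 1, by omega⟩
  rw [hF.2.2.2 (j + 1) hj1 hj2, Finset.sum_Icc_succ_top hj1, Nat.add_sub_cancel]
  rcases Nat.eq_zero_or_pos j with rfl | hj
  · rw [hF.1, finrank_bot]
    simp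
  · rw [hF.2.2.2 j hj (by omega)]

theorem IsFlagOfType.exists_isAdaptedBasis_extending [Module.Finite K M]
    (hF : IsFlagOfType F N y) (e : ℕ → ℕ) (s : ℕ → ℕ → M)
    (hs : ∀ j, 1 ≤ j → j ≤ N → ∀ k : Fin (e j), s j (k + 1) ∈ F j)
    (hli : ∀ j, 1 ≤ j → j ≤ N →
      LinearIndependent K (fun k : Fin (e j) => (F (j - 1)).mkQ (s j (k + 1)))) :
    ∃ u, IsAdaptedBasis F N y u ∧
      ∀ j, 1 ≤ j → j ≤ N → ∀ k : Fin (e j), u j (k + 1) = s j (k + 1) := by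
  have : ∀ j, ∃ t, 1 ≤ j → j ≤ N →
      IsBasisModulo (F (j - 1)) (F j) (y j) t ∧ ∀ k : Fin (e j), t (k + 1) = s j (k + 1) := by
    intro j
    by_cases hj : 1 ≤ j ∧ j ≤ N
    · obtain ⟨t, ht⟩ := exists_isBasisModulo_extending (hF.pred_le hj.1 hj.2)
        (hF.finrank_eq_add hj.1 hj.2) (hs j hj.1 hj.2) (hli j hj.1 hj.2)
      exact ⟨t, fun _ _ => ht⟩
    · exact ⟨0, fun h1 h2 => absurd ⟨h1, h2⟩ hj⟩
  choose u hu using this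
  exact ⟨u, fun j h1 h2 => (hu j h1 h2).1, fun j h1 h2 => (hu j h1 h2).2⟩

theorem IsAdaptedBasis.le_span (hu : IsAdaptedBasis F N y u) (h0 : F 0 = ⊥) :
    ∀ j ≤ N, F j ≤ span K (Set.range fun p : Cells N y => u p.1.1 p.1.2) := by
  intro j
  induction j with
  | zero => simp [h0]
  | succ j ih =>
    intro hj
    refine ((hu (j + 1) (by omega) hj).2.2).trans (sup_le (ih (by omega)) (span_mono ?_))
    rintro _ ⟨k, rfl⟩
    exact ⟨⟨(j + 1, k + 1), by omega, hj, by omega, k.isLt⟩, rfl⟩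

theorem IsAdaptedBasis.linearIndependent_and_span_eq_top [Module.Finite K M]
    (hu : IsAdaptedBasis F N y u) (hF : IsFlagOfType F N y) :
    LinearIndependent K (fun p : Cells N y => u p.1.1 p.1.2) ∧
      span K (Set.range fun p : Cells N y => u p.1.1 p.1.2) = ⊤ := by
  have hspan := hu.le_span hF.1 N le_rfl
  rw [hF.2.2.1] at hspan
  have := Fintype.ofFinite (Cells N y)
  refine ⟨linearIndependent_of_top_le_span_of_card_eq_finrank hspan ?_, top_le_iff.mp hspan⟩
  rw [Fintype.card_eq_nat_card, nat_card_cells, ← finrank_top K M, ← hF.2.2.1]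
  rcases Nat.eq_zero_or_pos N with rfl | hN
  · rw [hF.1, finrank_bot]
    simp
  · exact (hF.2.2.2 N hN le_rfl).symm

end Flag

theorem LinearIndependent.mkQ_map {R M N ι : Type*} [Ring R] [AddCommGroup M] [Module R M]
    [AddCommGroup N] [Module R N] (f : M →ₗ[R] N) {A W : Submodule R M} {B : Submodule R N}
    (hf : W ⊓ B.comap f ≤ A) {t : ι → M} (ht : ∀ k, t k ∈ W)
    (hli : LinearIndependent R (fun k => A.mkQ (t k))) :
    LinearIndependent R (fun k => B.mkQ (f (t k))) := by
  rw [linearIndependent_iff'] at hli ⊢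
  intro s g hg
  refine hli s g ?_
  simp_rw [← map_smul, ← map_sum, mkQ_apply, Quotient.mk_eq_zero] at hg ⊢
  exact hf ⟨sum_mem fun k _ => smul_mem _ _ (ht k), hg⟩

theorem exists_seq_of_step {T : ℕ → Type*} (P : ∀ m, T m → Prop)
    (R : ∀ m, T m → T (m + 1) → Prop) {a₀ : T 0} (h₀ : P 0 a₀)
    (step : ∀ m a, P m a → ∃ b, P (m + 1) b ∧ R m a b) :
    ∃ f : ∀ m, T m, ∀ m, P m (f m) ∧ R m (f m) (f (m + 1)) := by
  choose next hnextP hnextR using step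
  let f : ∀ m, {a : T m // P m a} :=
    fun m => Nat.rec ⟨a₀, h₀⟩ (fun m a => ⟨next m a.1 a.2, hnextP m a.1 a.2⟩) m
  exact ⟨fun m => (f m).1, fun m => ⟨(f m).2, hnextR m _ _⟩⟩

section JordanBasis

variable {n : ℕ} {w : ℕ → ℕ} {y : ℕ → ℕ → ℕ}
  {x : ∀ m : ℕ, (Fin (w m) → ℂ) →ₗ[ℂ] (Fin (w (m + 1)) → ℂ)}
  {V : ∀ i : ℕ, ℕ → Submodule ℂ (Fin (w i) → ℂ)}

theorem IsKerFlag.isFlagOfType (hV : IsKerFlag n w y V) {i : ℕ} (hi1 : 1 ≤ i) (hi2 : i ≤ n) :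
    IsFlagOfType (V i) (n - i + 1) (y i) :=
  let ⟨h0, hmono, htop, hrank⟩ := hV i hi1 hi2
  ⟨h0, fun j hj => hmono j (by omega), htop, hrank⟩

theorem exists_isAdaptedBasis_next (hV : IsKerFlag n w y V) (hpres : PreservesFlag n w x V)
    (hinj : ∀ i j, 1 ≤ i → i + 1 ≤ n → 2 ≤ j → j ≤ n - i + 1 →
      ∀ v ∈ V i j, x i v ∈ V (i + 1) (j - 2) → v ∈ V i (j - 1))
    {m : ℕ} (hm1 : 1 ≤ m) (hm2 : m + 1 ≤ n) {u : ℕ → ℕ → (Fin (w m) → ℂ)}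
    (hu : IsAdaptedBasis (V m) (n - m + 1) (y m) u) :
    ∃ u', IsAdaptedBasis (V (m + 1)) (n - (m + 1) + 1) (y (m + 1)) u' ∧
      ∀ j, 1 ≤ j → j ≤ n - m → ∀ k, 1 ≤ k → k ≤ y m (j + 1) → u' j k = x m (u (j + 1) k) := by
  have hmem : ∀ j, 1 ≤ j → j ≤ n - (m + 1) + 1 → ∀ k : Fin (y m (j + 1)),
      x m (u (j + 1) (k + 1)) ∈ V (m + 1) j := by
    intro j hj1 hj2 k
    have hk := (hu (j + 1) (by omega) (by omega)).1 k
    simpa using (hpres m hm1 hm2 (j + 1) (by omega) (by omega) _ hk).2 (by omega)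
  have hli : ∀ j, 1 ≤ j → j ≤ n - (m + 1) + 1 →
      LinearIndependent ℂ (fun k : Fin (y m (j + 1)) => (V (m + 1) (j - 1)).mkQ
        (x m (u (j + 1) (k + 1)))) := by
    intro j hj1 hj2
    have hu_li := (hu (j + 1) (by omega) (by omega)).2.1
    refine LinearIndependent.mkQ_map (x m) (A := V m j) (W := V m (j + 1))
      (fun v ⟨hv, hxv⟩ => ?_) (hu (j + 1) (by omega) (by omega)).1 (by simpa using hu_li)
    simpa using hinj m (j + 1) hm1 hm2 (by omega) (by omega) v hv (by simpa using hxv)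
  obtain ⟨u', hu', hforced⟩ :=
    (hV.isFlagOfType (i := m + 1) (by omega) hm2).exists_isAdaptedBasis_extending
      (fun j => y m (j + 1)) (fun j k => x m (u (j + 1) k)) hmem hli
  refine ⟨u', hu', fun j hj1 hj2 k hk1 hk2 => ?_⟩
  simpa [Nat.sub_add_cancel hk1] using hforced j hj1 (by omega) ⟨k - 1, by omega⟩

theorem exists_isAdaptedBasis_levels (hV : IsKerFlag n w y V) (hpres : PreservesFlag n w x V)
    (hinj : ∀ i j, 1 ≤ i → i + 1 ≤ n → 2 ≤ j → j ≤ n - i + 1 →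
      ∀ v ∈ V i j, x i v ∈ V (i + 1) (j - 2) → v ∈ V i (j - 1)) :
    ∃ u : ∀ m : ℕ, ℕ → ℕ → (Fin (w m) → ℂ), ∀ m,
      (1 ≤ m → m ≤ n → IsAdaptedBasis (V m) (n - m + 1) (y m) (u m)) ∧
      (1 ≤ m → m + 1 ≤ n → ∀ j, 1 ≤ j → j ≤ n - m → ∀ k, 1 ≤ k → k ≤ y m (j + 1) →
        u (m + 1) j k = x m (u m (j + 1) k)) := by
  refine exists_seq_of_step
    (fun m (u : ℕ → ℕ → (Fin (w m) → ℂ)) =>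
      1 ≤ m → m ≤ n → IsAdaptedBasis (V m) (n - m + 1) (y m) u)
    (fun m u u' => 1 ≤ m → m + 1 ≤ n → ∀ j, 1 ≤ j → j ≤ n - m → ∀ k, 1 ≤ k → k ≤ y m (j + 1) →
      u' j k = x m (u (j + 1) k)) (a₀ := 0) ?_ ?_
  · intro h
    omega
  intro m u hu
  by_cases hm : m + 1 ≤ n
  · rcases Nat.eq_zero_or_pos m with rfl | hm0
    · obtain ⟨u', hu', -⟩ := (hV.isFlagOfType le_rfl hm).exists_isAdaptedBasis_extending
        (fun _ => 0) (fun _ _ => 0) (fun _ _ _ k => k.elim0)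
        (fun _ _ _ => linearIndependent_empty_type)
      exact ⟨u', fun _ _ => hu', fun h => absurd h (by omega)⟩
    · obtain ⟨u', hu', hforced⟩ :=
        exists_isAdaptedBasis_next hV hpres hinj hm0 hm (hu hm0 (by omega))
      exact ⟨u', fun _ _ => hu', fun _ _ => hforced⟩
  · exact ⟨0, fun _ h => absurd h hm, fun _ h => absurd h hm⟩

end JordanBasis

theorem mem_orbit_of_kernel_flag_general (n : ℕ) (w : ℕ → ℕ)
    (y : ℕ → ℕ → ℕ)
    (x : ∀ m : ℕ, (Fin (w m) → ℂ) →ₗ[ℂ] (Fin (w (m + 1)) → ℂ))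
    (V : ∀ i : ℕ, ℕ → Submodule ℂ (Fin (w i) → ℂ))
    (hV : IsKerFlag n w y V) (hpres : PreservesFlag n w x V)
    (hinj : ∀ i j, 1 ≤ i → i + 1 ≤ n → 2 ≤ j → j ≤ n - i + 1 →
      ∀ v ∈ V i j, x i v ∈ V (i + 1) (j - 2) → v ∈ V i (j - 1)) :
    ∃ u : ∀ m : ℕ, ℕ → ℕ → (Fin (w m) → ℂ), IsJordanBasis n w y x u := by
  obtain ⟨u, hu⟩ := exists_isAdaptedBasis_levels hV hpres hinj
  refine ⟨u, fun i hi1 hi2 => ((hu i).1 hi1 hi2).linearIndependent_and_span_eq_top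
    (hV.isFlagOfType hi1 hi2), fun i j k hi1 hi2 hj1 hj2 hk1 hk2 => ?_⟩
  split_ifs with hj
  · obtain ⟨j, rfl⟩ : ∃ j', j = j' + 1 := ⟨j - 1, by omega⟩
    exact ((hu i).2 hi1 hi2 j (by omega) (by omega) k hk1 hk2).symm
  · obtain rfl : j = 1 := by omega
    have hmem := ((hu i).1 hi1 (by omega) 1 le_rfl hj2).1 ⟨k - 1, by omega⟩
    rw [Fin.val_mk, Nat.sub_add_cancel hk1] at hmem
    exact (hpres i hi1 hi2 1 le_rfl hj2 _ hmem).1 rfl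

/-- If `x` preserves a kernel flag `V` of type `Y` and all the induced
maps `V_{ij}/V_{i,j-1} → V_{i+1,j-1}/V_{i+1,j-2}` (for `j > 1`) are injective, then `x`
admits a Jordan basis of type `Y`, i.e. `x ∈ O_Y`. -/
theorem mem_orbit_of_kernel_flag (n : ℕ) (hn : 1 ≤ n) (w : ℕ → ℕ)
    (hw0 : ∀ m, m = 0 ∨ n < m → w m = 0)
    (y : ℕ → ℕ → ℕ) (hy : InP n w y)
    (x : ∀ m : ℕ, (Fin (w m) → ℂ) →ₗ[ℂ] (Fin (w (m + 1)) → ℂ))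
    (V : ∀ i : ℕ, ℕ → Submodule ℂ (Fin (w i) → ℂ))
    (hV : IsKerFlag n w y V) (hpres : PreservesFlag n w x V)
    (hinj : ∀ i j, 1 ≤ i → i + 1 ≤ n → 2 ≤ j → j ≤ n - i + 1 →
      ∀ v ∈ V i j, x i v ∈ V (i + 1) (j - 2) → v ∈ V i (j - 1)) :
    ∃ u : ∀ m : ℕ, ℕ → ℕ → (Fin (w m) → ℂ), IsJordanBasis n w y x u :=
  mem_orbit_of_kernel_flag_general n w y x V hV hpres hinj
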